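/- arXiv:1607.03435 — 9 statements merged into one kernel-verified Lean document; each statement's English description precedes it below -/
import Mathlib

section
/- Every hom-left-symmetric algebra is hom-Lie-admissible: if ass_φ(u,v,w) = ass_φ(v,u,w) for all u,v,w, where ass_φ(u,v,w) = (u·v)·φ(w) − φ(u)·(v·w), then the commutator bracket satisfies the hom-Jacobi identity. -/
/-- every hom-left-symmetric algebra is hom-Lie-admissible. -/
theorem homLeftSymmetric_is_homLieAdmissible {V : Type*} [AddCommGroup V] [Module ℝ V]
    (m : V →ₗ[ℝ] V →ₗ[ℝ] V) (φ : V →ₗ[ℝ] V)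
    (hφ : ∀ u v : V, φ (m u v) = m (φ u) (φ v))
    (hls : ∀ u v w : V,
      m (m u v) (φ w) - m (φ u) (m v w) = m (m v u) (φ w) - m (φ v) (m u w))
    (br : V → V → V) (hbr : ∀ u v : V, br u v = m u v - m v u) :
    ∀ u v w : V, br (φ u) (br v w) + br (φ v) (br w u) + br (φ w) (br u v) = 0 := by
  intro u v w
  have h1 := hls u v w
  have h2 := hls v w u
  have h3 := hls w u v
  simp only [hbr, map_sub, LinearMap.sub_apply]
  linear_combination (norm := abel) -h1 - h2 - h3
end

section
/- Let (g, [·,·]_g, φ_g) be a hom-Lie algebra and (g, A, ρ) an admissible representation with dual representation ρ̃ on g* defined by ⟨ρ̃(u)(α), v⟩ = −⟨α, ρ(u)(v)⟩. Then g ⊕ g* with bracket [u+α, v+β] := [u,v]_g + ρ̃(u)(β) − ρ̃(v)(α) and morphism Φ(u+α) := φ_g(u) + A*(α) is a hom-Lie algebra (where A* is the transpose of A). -/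
/-- semidirect-type hom-Lie structure on g ⊕ g* from an admissible representation. -/
theorem homLie_on_direct_sum_with_dual {g : Type*} [AddCommGroup g] [Module ℝ g]
    (br : g →ₗ[ℝ] g →ₗ[ℝ] g) (φ : g →ₗ[ℝ] g)
    (hanti : ∀ u v : g, br u v = - br v u)
    (hφ : ∀ u v : g, φ (br u v) = br (φ u) (φ v))
    (hjac : ∀ u v w : g, br (φ u) (br v w) + br (φ v) (br w u) + br (φ w) (br u v) = 0)
    -- a representation (g, A, ρ) of g on itself
    (A : g →ₗ[ℝ] g) (ρ : g →ₗ[ℝ] g →ₗ[ℝ] g)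
    (hrep1 : ∀ u x : g, ρ (φ u) (A x) = A (ρ u x))
    (hrep2 : ∀ u v x : g, ρ (br u v) (A x) = ρ (φ u) (ρ v x) - ρ (φ v) (ρ u x))
    -- the dual maps: ρ̃(u) = −ρ(u)ᵗ and A* = Aᵗ
    (ρt : g → Module.Dual ℝ g →ₗ[ℝ] Module.Dual ℝ g)
    (hρt : ∀ (u : g) (α : Module.Dual ℝ g) (v : g), ρt u α v = - α (ρ u v))
    (At : Module.Dual ℝ g →ₗ[ℝ] Module.Dual ℝ g)
    (hAt : ∀ (α : Module.Dual ℝ g) (v : g), At α v = α (A v))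
    -- admissibility: (g*, A*, ρ̃) is a representation
    (hadm1 : ∀ (u : g) (α : Module.Dual ℝ g), ρt (φ u) (At α) = At (ρt u α))
    (hadm2 : ∀ (u v : g) (α : Module.Dual ℝ g),
      ρt (br u v) (At α) = ρt (φ u) (ρt v α) - ρt (φ v) (ρt u α))
    -- the bracket and morphism on g ⊕ g*
    (Br : g × Module.Dual ℝ g → g × Module.Dual ℝ g → g × Module.Dual ℝ g)
    (hBr : ∀ x y : g × Module.Dual ℝ g,
      Br x y = (br x.1 y.1, ρt x.1 y.2 - ρt y.1 x.2))
    (Φ : g × Module.Dual ℝ g → g × Module.Dual ℝ g)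
    (hΦ : ∀ x : g × Module.Dual ℝ g, Φ x = (φ x.1, At x.2)) :
    (∀ x y : g × Module.Dual ℝ g, Br x y = - Br y x) ∧
    (∀ x y : g × Module.Dual ℝ g, Φ (Br x y) = Br (Φ x) (Φ y)) ∧
    (∀ x y z : g × Module.Dual ℝ g,
      Br (Φ x) (Br y z) + Br (Φ y) (Br z x) + Br (Φ z) (Br x y) = 0) := by
  refine ⟨?_, ?_, ?_⟩
  · intro x y
    rw [hBr, hBr]
    ext
    · simpa using hanti x.1 y.1
    · simp
  · intro x y
    rw [hΦ, hBr, hΦ, hΦ, hBr]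
    ext
    · simpa using hφ x.1 y.1
    · simp only [map_sub, hadm1]
  · intro x y z
    simp only [hBr, hΦ]
    ext
    · simpa using hjac x.1 y.1 z.1
    · simp only [Prod.fst_add, Prod.snd_add, map_sub, hadm2, Prod.snd_zero]
      abel
end

section
/- If (g, [·,·], φ, ⟨,⟩, K) is a para-Kähler hom-Lie algebra, then the bilinear form Ω(u,v) := ⟨(φ∘K)(u), v⟩ is a symplectic structure on g, i.e., Ω is skew-symmetric, non-degenerate, Ω(φ(u), φ(v)) = Ω(u,v), and Ω([u,v], φ(w)) + Ω([w,u], φ(v)) + Ω([v,w], φ(u)) = 0. -/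
theorem paraKahler_gives_symplectic {g : Type*} [AddCommGroup g] [Module ℝ g]
    (br : g →ₗ[ℝ] g →ₗ[ℝ] g) (φ : g →ₗ[ℝ] g)
    (hanti : ∀ u v : g, br u v = - br v u)
    (hφbr : ∀ u v : g, φ (br u v) = br (φ u) (φ v))
    (hjac : ∀ u v w : g, br (φ u) (br v w) + br (φ v) (br w u) + br (φ w) (br u v) = 0)
    (B : g →ₗ[ℝ] g →ₗ[ℝ] ℝ)
    (hBsymm : ∀ u v : g, B u v = B v u)
    (hBnd : ∀ u : g, (∀ v : g, B u v = 0) → u = 0)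
    (hBφ : ∀ u v : g, B (φ u) (φ v) = B u v)
    (hφinv : ∀ u : g, φ (φ u) = u)
    -- almost product structure
    (K : g →ₗ[ℝ] g) (hKbij : Function.Bijective K)
    (hKK : ∀ u : g, K (K u) = u)
    (hφK : ∀ u : g, φ (K u) = K (φ u))
    -- φ∘K is skew-symmetric with respect to B
    (hskew : ∀ u v : g, B (φ (K u)) v = - B u (φ (K v)))
    -- hom-Levi-Civita product
    (m : g →ₗ[ℝ] g →ₗ[ℝ] g)
    (hLC1 : ∀ u v : g, br u v = m u v - m v u)
    (hLC2 : ∀ u v w : g, B (m u v) (φ w) = - B (φ v) (m u w))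
    -- φ∘K is invariant with respect to the Levi-Civita product
    (hKinv : ∀ u v : g, m u (φ (K v)) = φ (K (m u v)))
:
    (∀ u v : g, B (φ (K u)) v = - B (φ (K v)) u) ∧
    (∀ u : g, (∀ v : g, B (φ (K u)) v = 0) → u = 0) ∧
    (∀ u v : g, B (φ (K (φ u))) (φ v) = B (φ (K u)) v) ∧
    (∀ u v w : g,
      B (φ (K (br u v))) (φ w) + B (φ (K (br w u))) (φ v) + B (φ (K (br v w))) (φ u) = 0) := by
  refine ⟨?_, ?_, ?_, ?_⟩
  · intro u v
    rw [hskew u v, hBsymm]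
  · intro u hu
    have h1 : φ (K u) = 0 := hBnd _ hu
    have h2 : K u = 0 := by
      have := congrArg φ h1
      rwa [hφinv, map_zero] at this
    have := congrArg K h2
    rwa [hKK, map_zero] at this
  · intro u v
    have h1 : K (φ u) = φ (K u) := (hφK u).symm
    rw [h1, hφinv, hBsymm, ← hBφ (φ (K u)) v, hφinv, hBsymm]
  · intro u v w
    -- key via Levi-Civita
    have key : ∀ a b c : g, B (φ (K (br a b))) (φ c)
        = B (K a) (m b c) - B (K b) (m a c) := by
      intro a b c
      have e : φ (K (br a b)) = m a (φ (K b)) - m b (φ (K a)) := by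
        rw [hLC1 a b, map_sub, map_sub, ← hKinv a b, ← hKinv b a]
      rw [e, map_sub, LinearMap.sub_apply, hLC2, hLC2, hφinv, hφinv]
      ring
    -- key via skew-symmetry
    have key2 : ∀ a b c : g, B (φ (K (br a b))) (φ c) = - B (K c) (br a b) := by
      intro a b c
      rw [hskew, hφK, hφinv, hBsymm]
    have s1 := key u v w
    have s2 := key w u v
    have s3 := key v w u
    have t1 := key2 u v w
    have t2 := key2 w u v
    have t3 := key2 v w u
    have e1 : B (K w) (br u v) = B (K w) (m u v) - B (K w) (m v u) := by
      rw [hLC1 u v, map_sub]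
    have e2 : B (K v) (br w u) = B (K v) (m w u) - B (K v) (m u w) := by
      rw [hLC1 w u, map_sub]
    have e3 : B (K u) (br v w) = B (K u) (m v w) - B (K u) (m w v) := by
      rw [hLC1 v w, map_sub]
    linarith
end

section
/- In a para-Kähler hom-Lie algebra (g, [·,·], φ, ⟨,⟩, K), the eigenspaces g¹ = ker(φ∘K − Id) and g⁻¹ = ker(φ∘K + Id) are isotropic with respect to ⟨,⟩ and Lagrangian with respect to the symplectic form Ω(u,v) = ⟨(φ∘K)u, v⟩, i.e., (g¹)^⊥Ω = g¹ and (g⁻¹)^⊥Ω = g⁻¹. -/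
theorem paraKahler_eigenspaces_isotropic_lagrangian {g : Type*} [AddCommGroup g] [Module ℝ g]
    (br : g →ₗ[ℝ] g →ₗ[ℝ] g) (φ : g →ₗ[ℝ] g)
    (hanti : ∀ u v : g, br u v = - br v u)
    (hφbr : ∀ u v : g, φ (br u v) = br (φ u) (φ v))
    (hjac : ∀ u v w : g, br (φ u) (br v w) + br (φ v) (br w u) + br (φ w) (br u v) = 0)
    (B : g →ₗ[ℝ] g →ₗ[ℝ] ℝ)
    (hBsymm : ∀ u v : g, B u v = B v u)
    (hBnd : ∀ u : g, (∀ v : g, B u v = 0) → u = 0)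
    (hBφ : ∀ u v : g, B (φ u) (φ v) = B u v)
    (hφinv : ∀ u : g, φ (φ u) = u)
    -- almost product structure
    (K : g →ₗ[ℝ] g) (hKbij : Function.Bijective K)
    (hKK : ∀ u : g, K (K u) = u)
    (hφK : ∀ u : g, φ (K u) = K (φ u))
    -- φ∘K is skew-symmetric with respect to B
    (hskew : ∀ u v : g, B (φ (K u)) v = - B u (φ (K v)))
    -- hom-Levi-Civita product
    (m : g →ₗ[ℝ] g →ₗ[ℝ] g)
    (hLC1 : ∀ u v : g, br u v = m u v - m v u)
    (hLC2 : ∀ u v w : g, B (m u v) (φ w) = - B (φ v) (m u w))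
    -- φ∘K is invariant with respect to the Levi-Civita product
    (hKinv : ∀ u v : g, m u (φ (K v)) = φ (K (m u v)))
:
    (∀ u v : g, φ (K u) = u → φ (K v) = v → B u v = 0) ∧
    (∀ u v : g, φ (K u) = - u → φ (K v) = - v → B u v = 0) ∧
    (∀ u : g, (∀ v : g, φ (K v) = v → B (φ (K u)) v = 0) ↔ φ (K u) = u) ∧
    (∀ u : g, (∀ v : g, φ (K v) = - v → B (φ (K u)) v = 0) ↔ φ (K u) = - u) := by
  have hPP : ∀ u : g, φ (K (φ (K u))) = u := fun u => by
    rw [hφK (φ (K u)), hφinv, hKK]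
  have iso1 : ∀ u v : g, φ (K u) = u → φ (K v) = v → B u v = 0 := by
    intro u v hu hv
    have h := hskew u v
    rw [hu, hv] at h
    linarith
  have iso2 : ∀ u v : g, φ (K u) = - u → φ (K v) = - v → B u v = 0 := by
    intro u v hu hv
    have h := hskew u v
    rw [hu, hv] at h
    simp only [map_neg, LinearMap.neg_apply, neg_neg] at h
    linarith
  -- eigenvector properties of the decomposition
  have hPa : ∀ u : g, φ (K ((1/2 : ℝ) • (u + φ (K u)))) = (1/2 : ℝ) • (u + φ (K u)) := by
    intro u
    simp only [map_smul, map_add, hPP]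
    rw [add_comm]
  have hPb : ∀ u : g, φ (K ((1/2 : ℝ) • (u - φ (K u)))) = -((1/2 : ℝ) • (u - φ (K u))) := by
    intro u
    simp only [map_smul, map_sub, hPP]
    module
  refine ⟨iso1, iso2, ?_, ?_⟩
  · intro u
    constructor
    · intro h
      set a := (1/2 : ℝ) • (u + φ (K u)) with ha_def
      set b := (1/2 : ℝ) • (u - φ (K u)) with hb_def
      have ha := hPa u
      have hb := hPb u
      have hab : a + b = u := by
        rw [ha_def, hb_def, ← smul_add]
        have : u + φ (K u) + (u - φ (K u)) = (2 : ℝ) • u := by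
          rw [two_smul]; abel
        rw [this, smul_smul]; norm_num
      have hPu : φ (K u) = a - b := by
        rw [← hab, map_add, map_add, ha, hb]; abel
      have hbzero : b = 0 := by
        apply hBnd
        intro w
        have haw := hPa w
        have hbw := hPb w
        have hw : (1/2 : ℝ) • (w + φ (K w)) + (1/2 : ℝ) • (w - φ (K w)) = w := by
          rw [← smul_add]
          have : w + φ (K w) + (w - φ (K w)) = (2 : ℝ) • w := by
            rw [two_smul]; abel
          rw [this, smul_smul]; norm_num
        have h1 : B b ((1/2 : ℝ) • (w + φ (K w))) = 0 := by
          have h2 := h ((1/2 : ℝ) • (w + φ (K w))) haw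
          rw [hPu] at h2
          have h3 : B a ((1/2 : ℝ) • (w + φ (K w))) = 0 := iso1 a _ ha haw
          have h4 : B (a - b) ((1/2 : ℝ) • (w + φ (K w))) =
              B a ((1/2 : ℝ) • (w + φ (K w))) - B b ((1/2 : ℝ) • (w + φ (K w))) := by
            simp only [map_sub, LinearMap.sub_apply]
          rw [h4, h3] at h2
          linarith
        have h5 : B b ((1/2 : ℝ) • (w - φ (K w))) = 0 := iso2 b _ hb hbw
        calc B b w = B b ((1/2:ℝ) • (w + φ (K w)) + (1/2:ℝ) • (w - φ (K w))) := by rw [hw]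
          _ = 0 := by rw [map_add, h1, h5, add_zero]
      rw [hPu, hbzero, sub_zero, ← hab, hbzero, add_zero]
    · intro hu v hv
      rw [hu]
      exact iso1 u v hu hv
  · intro u
    constructor
    · intro h
      set a := (1/2 : ℝ) • (u + φ (K u)) with ha_def
      set b := (1/2 : ℝ) • (u - φ (K u)) with hb_def
      have ha := hPa u
      have hb := hPb u
      have hab : a + b = u := by
        rw [ha_def, hb_def, ← smul_add]
        have : u + φ (K u) + (u - φ (K u)) = (2 : ℝ) • u := by
          rw [two_smul]; abel
        rw [this, smul_smul]; norm_num
      have hPu : φ (K u) = a - b := by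
        rw [← hab, map_add, map_add, ha, hb]; abel
      have hazero : a = 0 := by
        apply hBnd
        intro w
        have haw := hPa w
        have hbw := hPb w
        have hw : (1/2 : ℝ) • (w + φ (K w)) + (1/2 : ℝ) • (w - φ (K w)) = w := by
          rw [← smul_add]
          have : w + φ (K w) + (w - φ (K w)) = (2 : ℝ) • w := by
            rw [two_smul]; abel
          rw [this, smul_smul]; norm_num
        have h1 : B a ((1/2 : ℝ) • (w - φ (K w))) = 0 := by
          have h2 := h ((1/2 : ℝ) • (w - φ (K w))) hbw
          rw [hPu] at h2
          have h3 : B b ((1/2 : ℝ) • (w - φ (K w))) = 0 := iso2 b _ hb hbw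
          have h4 : B (a - b) ((1/2 : ℝ) • (w - φ (K w))) =
              B a ((1/2 : ℝ) • (w - φ (K w))) - B b ((1/2 : ℝ) • (w - φ (K w))) := by
            simp only [map_sub, LinearMap.sub_apply]
          rw [h4, h3] at h2
          linarith
        have h5 : B a ((1/2 : ℝ) • (w + φ (K w))) = 0 := iso1 a _ ha haw
        calc B a w = B a ((1/2:ℝ) • (w + φ (K w)) + (1/2:ℝ) • (w - φ (K w))) := by rw [hw]
          _ = 0 := by rw [map_add, h1, h5, add_zero]
      rw [hPu, hazero, zero_sub, ← hab, hazero, zero_add]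
    · intro hu v hv
      rw [hu]
      have := iso2 u v hu hv
      simp only [map_neg, LinearMap.neg_apply, this, neg_zero]
end

section
/- In a para-Kähler hom-Lie algebra, the Nijenhuis torsion of φ∘K vanishes: [(φ∘K)u, (φ∘K)v] − (φ∘K)[(φ∘K)u, v] − (φ∘K)[u, (φ∘K)v] + [u,v] = 0 for all u, v. -/
theorem paraKahler_nijenhuis_vanishes {g : Type*} [AddCommGroup g] [Module ℝ g]
    (br : g →ₗ[ℝ] g →ₗ[ℝ] g) (φ : g →ₗ[ℝ] g)
    (hanti : ∀ u v : g, br u v = - br v u)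
    (hφbr : ∀ u v : g, φ (br u v) = br (φ u) (φ v))
    (hjac : ∀ u v w : g, br (φ u) (br v w) + br (φ v) (br w u) + br (φ w) (br u v) = 0)
    (B : g →ₗ[ℝ] g →ₗ[ℝ] ℝ)
    (hBsymm : ∀ u v : g, B u v = B v u)
    (hBnd : ∀ u : g, (∀ v : g, B u v = 0) → u = 0)
    (hBφ : ∀ u v : g, B (φ u) (φ v) = B u v)
    (hφinv : ∀ u : g, φ (φ u) = u)
    -- almost product structure
    (K : g →ₗ[ℝ] g) (hKbij : Function.Bijective K)
    (hKK : ∀ u : g, K (K u) = u)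
    (hφK : ∀ u : g, φ (K u) = K (φ u))
    -- φ∘K is skew-symmetric with respect to B
    (hskew : ∀ u v : g, B (φ (K u)) v = - B u (φ (K v)))
    -- hom-Levi-Civita product
    (m : g →ₗ[ℝ] g →ₗ[ℝ] g)
    (hLC1 : ∀ u v : g, br u v = m u v - m v u)
    (hLC2 : ∀ u v w : g, B (m u v) (φ w) = - B (φ v) (m u w))
    -- φ∘K is invariant with respect to the Levi-Civita product
    (hKinv : ∀ u v : g, m u (φ (K v)) = φ (K (m u v)))
:
    ∀ u v : g,
      br (φ (K u)) (φ (K v)) - φ (K (br (φ (K u)) v)) - φ (K (br u (φ (K v)))) + br u v = 0 := by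
  intro u v
  have hJJ : ∀ w : g, φ (K (φ (K w))) = w := by
    intro w; rw [hφK, hφinv, hKK]
  simp only [hLC1, map_sub, ← hKinv, hJJ]
  abel
end

section
/- In a para-Kähler hom-Lie algebra with symplectic form Ω(u,v) = ⟨(φ∘K)u, v⟩ and associated hom-left-symmetric product a (defined by Ω(a(u,v), φ(w)) = −Ω(φ(v), [u,w])), the Levi-Civita product · coincides with a on each eigenspace: u·v = a(u,v) for u,v ∈ g¹ and ū·v̄ = a(ū,v̄) for ū,v̄ ∈ g⁻¹. -/
theorem paraKahler_leviCivita_eq_leftSymmetric {g : Type*} [AddCommGroup g] [Module ℝ g]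
    (br : g →ₗ[ℝ] g →ₗ[ℝ] g) (φ : g →ₗ[ℝ] g)
    (hanti : ∀ u v : g, br u v = - br v u)
    (hφbr : ∀ u v : g, φ (br u v) = br (φ u) (φ v))
    (hjac : ∀ u v w : g, br (φ u) (br v w) + br (φ v) (br w u) + br (φ w) (br u v) = 0)
    (B : g →ₗ[ℝ] g →ₗ[ℝ] ℝ)
    (hBsymm : ∀ u v : g, B u v = B v u)
    (hBnd : ∀ u : g, (∀ v : g, B u v = 0) → u = 0)
    (hBφ : ∀ u v : g, B (φ u) (φ v) = B u v)
    (hφinv : ∀ u : g, φ (φ u) = u)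
    -- almost product structure
    (K : g →ₗ[ℝ] g) (hKbij : Function.Bijective K)
    (hKK : ∀ u : g, K (K u) = u)
    (hφK : ∀ u : g, φ (K u) = K (φ u))
    -- φ∘K is skew-symmetric with respect to B
    (hskew : ∀ u v : g, B (φ (K u)) v = - B u (φ (K v)))
    -- hom-Levi-Civita product
    (m : g →ₗ[ℝ] g →ₗ[ℝ] g)
    (hLC1 : ∀ u v : g, br u v = m u v - m v u)
    (hLC2 : ∀ u v w : g, B (m u v) (φ w) = - B (φ v) (m u w))
    -- φ∘K is invariant with respect to the Levi-Civita product
    (hKinv : ∀ u v : g, m u (φ (K v)) = φ (K (m u v)))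

    -- the hom-left-symmetric product a associated with Ω(x,y) = B((φ∘K)x, y)
    (a : g →ₗ[ℝ] g →ₗ[ℝ] g)
    (ha : ∀ u v w : g, B (φ (K (a u v))) (φ w) = - B (φ (K (φ v))) (br u w)) :
    (∀ u v : g, φ (K u) = u → φ (K v) = v → m u v = a u v) ∧
    (∀ u v : g, φ (K u) = - u → φ (K v) = - v → m u v = a u v) := by
  have key : ∀ (ε : ℝ), ε * ε = 1 → ∀ u v : g, φ (K u) = ε • u → φ (K v) = ε • v →
      m u v = a u v := by
    intro ε hε u v hu hv
    -- same-eigenspace vectors are B-orthogonal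
    have orth : ∀ x y : g, φ (K x) = ε • x → φ (K y) = ε • y → B x y = 0 := by
      intro x y hx hy
      have hx' : x = ε • φ (K x) := by rw [hx, smul_smul, hε, one_smul]
      have h1 : B x y = -B x y := by
        calc B x y = ε * B (φ (K x)) y := by
              conv_lhs => rw [hx']
              simp
          _ = ε * (- B x (φ (K y))) := by rw [hskew]
          _ = ε * (- (ε * B x y)) := by rw [hy]; simp
          _ = -(ε * ε) * B x y := by ring
          _ = -B x y := by rw [hε]; ring
      linarith
    have h1 : φ (K (m u v)) = ε • m u v := by
      rw [← hKinv u v, hv, map_smul]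
    have h2 : φ (K (φ v)) = ε • φ v := by
      have hKv : K v = ε • φ v := by
        rw [← hφinv (K v), hv, map_smul]
      rw [hφK, hφinv, hKv]
    have h3 : ∀ w : g, φ (K (m w u)) = ε • m w u := by
      intro w; rw [← hKinv w u, hu, map_smul]
    have main : ∀ w : g, B (φ (K (m u v))) (φ w) = B (φ (K (a u v))) (φ w) := by
      intro w
      have horth : B (φ v) (m w u) = 0 := orth _ _ h2 (h3 w)
      rw [h1, ha u v w, h2, hLC1 u w]
      simp only [map_smul, LinearMap.smul_apply, smul_eq_mul, map_sub,
        LinearMap.sub_apply]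
      rw [hLC2 u v w, horth]
      ring
    have hzero : φ (K (m u v - a u v)) = 0 := by
      apply hBnd
      intro y
      have := main (φ y)
      simp only [map_sub, LinearMap.sub_apply] at this ⊢
      rw [hφinv] at this
      linarith
    have hK0 : K (m u v - a u v) = 0 := by
      rw [← hφinv (K (m u v - a u v)), hzero, map_zero]
    have : m u v - a u v = 0 := by
      rw [← hKK (m u v - a u v), hK0, map_zero]
    exact sub_eq_zero.mp this
  constructor
  · intro u v hu hv
    exact key 1 (by norm_num) u v (by simpa using hu) (by simpa using hv)
  · intro u v hu hv
    refine key (-1) (by norm_num) u v ?_ ?_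
    · rw [hu]; simp
    · rw [hv]; simp
end

section
/- In the extendible hom-algebra (V ⊕ V*, ·, Φ), the curvature K(x,y) = L_{Φ(x)}∘L_y − L_{Φ(y)}∘L_x − L_{[x,y]}∘Φ satisfies K(u,v)w = 0, K(u,v)γ = 0, K(α,β)w = 0, K(α,β)γ = 0 for u,v,w ∈ V, α,β,γ ∈ V*, and K(u,α)v = ρ(u,α)v, K(α,u)β = ρ*(α,u)β, where ρ(u,α) = −L_{φ(u)}L^t_{φ*(α)} + L^t_α L_u − Φ∘L^t_{L^t_{φ(u)}α} − L_{L^t_{φ*(α)}u}∘φ and ρ*(α,u) = −L_{φ*(α)}L^t_{φ(u)} + L^t_u L_α − Φ∘L^t_{L^t_{φ*(α)}u} − L_{L^t_{φ(u)}α}∘φ*. -/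
theorem extendible_curvature {V W : Type*} [AddCommGroup V] [Module ℝ V] [AddCommGroup W] [Module ℝ W]
    -- duality pairing between W (= V*) and V
    (p : W →ₗ[ℝ] V →ₗ[ℝ] ℝ)
    (hpV : ∀ v : V, (∀ α : W, p α v = 0) → v = 0)
    (hpW : ∀ α : W, (∀ v : V, p α v = 0) → α = 0)
    -- involutive hom-left-symmetric algebra (V, ·, φ)
    (mV : V →ₗ[ℝ] V →ₗ[ℝ] V) (fV : V →ₗ[ℝ] V)
    (hfV : ∀ u v : V, fV (mV u v) = mV (fV u) (fV v))
    (hfVinv : ∀ u : V, fV (fV u) = u)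
    (hVls : ∀ u v w : V,
      mV (mV u v) (fV w) - mV (fV u) (mV v w) = mV (mV v u) (fV w) - mV (fV v) (mV u w))
    -- involutive hom-left-symmetric algebra (V*, ·, φ*)
    (mW : W →ₗ[ℝ] W →ₗ[ℝ] W) (fW : W →ₗ[ℝ] W)
    (hfW : ∀ α β : W, fW (mW α β) = mW (fW α) (fW β))
    (hfWinv : ∀ α : W, fW (fW α) = α)
    (hWls : ∀ α β γ : W,
      mW (mW α β) (fW γ) - mW (fW α) (mW β γ) = mW (mW β α) (fW γ) - mW (fW β) (mW α γ))
    -- φ* = φᵗ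
    (hdual : ∀ (α : W) (v : V), p (fW α) v = p α (fV v))
    -- transposes of the left multiplications: Lᵗ_α : V → V and Lᵗ_u : W → W
    (Lt : W →ₗ[ℝ] V →ₗ[ℝ] V)
    (hLt : ∀ (α : W) (v : V) (β : W), p β (Lt α v) = p (mW α β) v)
    (Ltw : V →ₗ[ℝ] W →ₗ[ℝ] W)
    (hLtw : ∀ (u : V) (β : W) (v : V), p (Ltw u β) v = p β (mV u v))
    -- the extended product and morphism on V ⊕ V*
    (M : V × W → V × W → V × W)
    (hM : ∀ x y : V × W,
      M x y = (mV x.1 y.1 - Lt (fW x.2) y.1, mW x.2 y.2 - Ltw (fV x.1) y.2))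
    (Φ : V × W → V × W)
    (hΦ : ∀ x : V × W, Φ x = (fV x.1, fW x.2))
    (ρ : V → W → V → V)
    (hρ : ∀ (u : V) (α : W) (v : V),
      ρ u α v = - mV (fV u) (Lt (fW α) v) + Lt α (mV u v)
        - fV (Lt (Ltw (fV u) α) v) - mV (Lt (fW α) u) (fV v))
    (ρs : W → V → W → W)
    (hρs : ∀ (α : W) (u : V) (β : W),
      ρs α u β = - mW (fW α) (Ltw (fV u) β) + Ltw u (mW α β)
        - fW (Ltw (Lt (fW α) u) β) - mW (Ltw (fV u) α) (fW β))
    (Kc : V × W → V × W → V × W → V × W)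
    (hKc : ∀ x y z : V × W,
      Kc x y z = M (Φ x) (M y z) - M (Φ y) (M x z) - M (M x y - M y x) (Φ z)) :
    (∀ u v w : V, Kc (u, 0) (v, 0) (w, 0) = 0) ∧
    (∀ (u v : V) (γ : W), Kc (u, 0) (v, 0) (0, γ) = 0) ∧
    (∀ (α β : W) (w : V), Kc (0, α) (0, β) (w, 0) = 0) ∧
    (∀ α β γ : W, Kc (0, α) (0, β) (0, γ) = 0) ∧
    (∀ (u : V) (α : W) (v : V), Kc (u, 0) (0, α) (v, 0) = (ρ u α v, 0)) ∧
    (∀ (α : W) (u : V) (β : W), Kc (0, α) (u, 0) (0, β) = (0, ρs α u β)) := by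
  have eqV : ∀ a b : V, (∀ γ : W, p γ a = p γ b) → a = b := by
    intro a b h
    have h0 : ∀ γ : W, p γ (a - b) = 0 := by intro γ; simp [h γ]
    exact sub_eq_zero.mp (hpV _ h0)
  have eqW : ∀ a b : W, (∀ v : V, p a v = p b v) → a = b := by
    intro a b h
    have h0 : ∀ v : V, p (a - b) v = 0 := by intro v; simp [h v]
    exact sub_eq_zero.mp (hpW _ h0)
  -- key1 : Lt (fW β) (fV v) = fV (Lt β v)
  have key1 : ∀ (β : W) (v : V), Lt (fW β) (fV v) = fV (Lt β v) := by
    intro β v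
    apply eqV
    intro γ
    have h1 : p γ (Lt (fW β) (fV v)) = p (mW β (fW γ)) v := by
      rw [hLt, ← hfWinv (mW (fW β) γ), hfW, hfWinv, hdual, hfVinv]
    have h2 : p γ (fV (Lt β v)) = p (mW β (fW γ)) v := by
      rw [← hdual, hLt]
    rw [h1, h2]
  -- key2 : Ltw (fV u) (fW β) = fW (Ltw u β)
  have key2 : ∀ (u : V) (β : W), Ltw (fV u) (fW β) = fW (Ltw u β) := by
    intro u β
    apply eqW
    intro v
    have h1 : p (Ltw (fV u) (fW β)) v = p β (mV u (fV v)) := by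
      rw [hLtw, hdual, hfV, hfVinv]
    have h2 : p (fW (Ltw u β)) v = p β (mV u (fV v)) := by
      rw [hdual, hLtw]
    rw [h1, h2]
  refine ⟨?_, ?_, ?_, ?_, ?_, ?_⟩
  · intro u v w
    rw [hKc]
    simp only [hM, hΦ, Prod.fst, Prod.snd, map_zero, LinearMap.zero_apply]
    simp only [Prod.mk_sub_mk, Prod.ext_iff, Prod.fst_zero, Prod.snd_zero]
    constructor
    · have h := hVls u v w
      simp only [map_zero, LinearMap.zero_apply, sub_zero, zero_sub, map_sub, map_neg,
        neg_zero, LinearMap.sub_apply, LinearMap.neg_apply]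
      linear_combination (norm := module) -h
    · simp [map_zero]
  · intro u v γ
    rw [hKc]
    simp only [hM, hΦ, Prod.fst, Prod.snd, map_zero, LinearMap.zero_apply]
    simp only [Prod.mk_sub_mk, Prod.ext_iff, Prod.fst_zero, Prod.snd_zero]
    constructor
    · simp [map_zero]
    · simp only [map_zero, LinearMap.zero_apply, sub_zero, zero_sub, map_sub, map_neg,
        neg_zero, LinearMap.sub_apply, LinearMap.neg_apply]
      apply eqW
      intro w
      simp only [map_sub, map_neg, LinearMap.sub_apply, LinearMap.neg_apply, map_zero,
        LinearMap.zero_apply]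
      have e1 : p (Ltw (fV (fV u)) (Ltw (fV v) γ)) w = p γ (mV (fV v) (mV u w)) := by
        rw [hfVinv, hLtw, hLtw]
      have e2 : p (Ltw (fV (fV v)) (Ltw (fV u) γ)) w = p γ (mV (fV u) (mV v w)) := by
        rw [hfVinv, hLtw, hLtw]
      have e3 : p (Ltw (fV (mV u v)) (fW γ)) w = p γ (mV (mV u v) (fV w)) := by
        rw [hLtw, hdual, hfV, hfVinv]
      have e4 : p (Ltw (fV (mV v u)) (fW γ)) w = p γ (mV (mV v u) (fV w)) := by
        rw [hLtw, hdual, hfV, hfVinv]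
      have h := hVls u v w
      have h' := congrArg (p γ) h
      simp only [map_sub] at h'
      linarith [e1, e2, e3, e4, h']
  · intro α β w
    rw [hKc]
    simp only [hM, hΦ, Prod.fst, Prod.snd, map_zero, LinearMap.zero_apply]
    simp only [Prod.mk_sub_mk, Prod.ext_iff, Prod.fst_zero, Prod.snd_zero]
    constructor
    · simp only [map_zero, LinearMap.zero_apply, sub_zero, zero_sub, map_sub, map_neg,
        neg_zero, LinearMap.sub_apply, LinearMap.neg_apply]
      apply eqV
      intro γ
      simp only [map_sub, map_neg, LinearMap.sub_apply, LinearMap.neg_apply, map_zero,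
        LinearMap.zero_apply]
      have e1 : p γ (Lt (fW (fW α)) (Lt (fW β) w)) = p (mW (fW β) (mW α γ)) w := by
        rw [hfWinv, hLt, hLt]
      have e2 : p γ (Lt (fW (fW β)) (Lt (fW α) w)) = p (mW (fW α) (mW β γ)) w := by
        rw [hfWinv, hLt, hLt]
      have e3 : p γ (Lt (fW (mW α β)) (fV w)) = p (mW (mW α β) (fW γ)) w := by
        rw [hLt, ← hdual, hfW, hfWinv]
      have e4 : p γ (Lt (fW (mW β α)) (fV w)) = p (mW (mW β α) (fW γ)) w := by
        rw [hLt, ← hdual, hfW, hfWinv]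
      have h := hWls α β γ
      have h' := congrArg (fun x => p x w) h
      simp only [map_sub, LinearMap.sub_apply] at h'
      linarith [e1, e2, e3, e4, h']
    · simp [map_zero]
  · intro α β γ
    rw [hKc]
    simp only [hM, hΦ, Prod.fst, Prod.snd, map_zero, LinearMap.zero_apply]
    simp only [Prod.mk_sub_mk, Prod.ext_iff, Prod.fst_zero, Prod.snd_zero]
    constructor
    · simp [map_zero]
    · have h := hWls α β γ
      simp only [map_zero, LinearMap.zero_apply, sub_zero, zero_sub, map_sub, map_neg,
        neg_zero, LinearMap.sub_apply, LinearMap.neg_apply]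
      linear_combination (norm := module) -h
  · intro u α v
    rw [hKc, hρ]
    simp only [hM, hΦ, Prod.fst, Prod.snd, map_zero, LinearMap.zero_apply]
    simp only [Prod.mk_sub_mk, Prod.ext_iff]
    constructor
    · simp only [map_zero, LinearMap.zero_apply, sub_zero, zero_sub, map_sub, map_neg,
        neg_zero, LinearMap.sub_apply, LinearMap.neg_apply]
      have k := key1 (Ltw (fV u) α) v
      rw [hfWinv]
      linear_combination (norm := module) -k
    · simp [map_zero, key2]
  · intro α u β
    rw [hKc, hρs]
    simp only [hM, hΦ, Prod.fst, Prod.snd, map_zero, LinearMap.zero_apply]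
    simp only [Prod.mk_sub_mk, Prod.ext_iff]
    constructor
    · simp [map_zero, key1]
    · simp only [map_zero, LinearMap.zero_apply, sub_zero, zero_sub, map_sub, map_neg,
        neg_zero, LinearMap.sub_apply, LinearMap.neg_apply]
      have k := key2 (Lt (fW α) u) β
      rw [hfVinv]
      linear_combination (norm := module) -k
end

section
/- The extendible hom-algebra (V ⊕ V*, ·, Φ) is hom-left-symmetric if and only if ρ(u,α) = 0 and ρ*(α,u) = 0 for all u ∈ V, α ∈ V*. -/
/-!
Write `x = u + α`, `y = v + β`, `z = w + γ` and pair the `V`-component of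
`(x·y)·Φz − Φx·(y·z) − (y·x)·Φz + Φy·(x·z)` against `V*`. Once `φ ∘ Lᵗ_α = Lᵗ_{φ*α} ∘ φ` is
used, its terms built from `u, v, w` alone cancel by hom-left-symmetry of `V`, those quadratic
in `α, β` cancel by the transpose of hom-left-symmetry of `V*`, and the mixed ones add up to
`ρ(v, α) w − ρ(u, β) w`. The `V*`-component is the same computation with `V` and `V*`
exchanged and gives `ρ*(β, u) γ − ρ*(α, v) γ`. Choosing `x, y, z` so that only one `ρ` or `ρ*`
term survives shows that each of them vanishes when `V ⊕ V*` is hom-left-symmetric.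
-/

section ExtendedProduct

variable {V W : Type*} [AddCommGroup V] [Module ℝ V] [AddCommGroup W] [Module ℝ W]
  (p : W →ₗ[ℝ] V →ₗ[ℝ] ℝ) (mV : V →ₗ[ℝ] V →ₗ[ℝ] V) (fV : V →ₗ[ℝ] V)
  (mW : W →ₗ[ℝ] W →ₗ[ℝ] W) (fW : W →ₗ[ℝ] W)
  (Lt : W →ₗ[ℝ] V →ₗ[ℝ] V) (Ltw : V →ₗ[ℝ] W →ₗ[ℝ] W)

/-- The `V`-component of `(u + α)·(v + β)`, which does not depend on `β`. With the roles of
`V` and `V*` exchanged it is the `V*`-component. -/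
def extMulFst (u : V) (α : W) (v : V) : V :=
  mV u v - Lt (fW α) v

def rho (u : V) (α : W) (v : V) : V :=
  - mV (fV u) (Lt (fW α) v) + Lt α (mV u v) - fV (Lt (Ltw (fV u) α) v) - mV (Lt (fW α) u) (fV v)

variable {p mV fV mW fW Lt Ltw}

theorem eq_of_forall_pairing_eq (hpV : ∀ v : V, (∀ α : W, p α v = 0) → v = 0) {a b : V}
    (h : ∀ δ : W, p δ a = p δ b) : a = b :=
  sub_eq_zero.mp (hpV _ fun δ => by rw [map_sub, h, sub_self])

theorem map_transpose_eq_transpose_map (hpV : ∀ v : V, (∀ α : W, p α v = 0) → v = 0)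
    (hfW : ∀ α β : W, fW (mW α β) = mW (fW α) (fW β)) (hfWinv : ∀ α : W, fW (fW α) = α)
    (hdual : ∀ (α : W) (v : V), p (fW α) v = p α (fV v))
    (hLt : ∀ (α : W) (v : V) (β : W), p β (Lt α v) = p (mW α β) v) (α : W) (v : V) :
    fV (Lt α v) = Lt (fW α) (fV v) :=
  eq_of_forall_pairing_eq hpV fun δ => by
    rw [← hdual, hLt, hLt, ← hdual, hfW, hfWinv]

theorem transpose_leftSymm (hpV : ∀ v : V, (∀ α : W, p α v = 0) → v = 0)
    (hWls : ∀ α β γ : W,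
      mW (mW α β) (fW γ) - mW (fW α) (mW β γ) = mW (mW β α) (fW γ) - mW (fW β) (mW α γ))
    (hdual : ∀ (α : W) (v : V), p (fW α) v = p α (fV v))
    (hLt : ∀ (α : W) (v : V) (β : W), p β (Lt α v) = p (mW α β) v) (α β : W) (w : V) :
    Lt α (Lt (fW β) w) + fV (Lt (mW α β) w) = Lt β (Lt (fW α) w) + fV (Lt (mW β α) w) :=
  eq_of_forall_pairing_eq hpV fun δ => by
    have h := congrArg (fun γ => p γ w) (hWls α β δ)
    simp only [map_add, map_sub, LinearMap.sub_apply, ← hdual, hLt] at h ⊢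
    linarith

theorem extMulFst_leftSymm_defect (hpV : ∀ v : V, (∀ α : W, p α v = 0) → v = 0)
    (hVls : ∀ u v w : V,
      mV (mV u v) (fV w) - mV (fV u) (mV v w) = mV (mV v u) (fV w) - mV (fV v) (mV u w))
    (hfW : ∀ α β : W, fW (mW α β) = mW (fW α) (fW β)) (hfWinv : ∀ α : W, fW (fW α) = α)
    (hWls : ∀ α β γ : W,
      mW (mW α β) (fW γ) - mW (fW α) (mW β γ) = mW (mW β α) (fW γ) - mW (fW β) (mW α γ))
    (hdual : ∀ (α : W) (v : V), p (fW α) v = p α (fV v))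
    (hLt : ∀ (α : W) (v : V) (β : W), p β (Lt α v) = p (mW α β) v) (u v w : V) (α β : W) :
    (extMulFst mV fW Lt (extMulFst mV fW Lt u α v) (extMulFst mW fV Ltw α u β) (fV w)
        - extMulFst mV fW Lt (fV u) (fW α) (extMulFst mV fW Lt v β w))
      - (extMulFst mV fW Lt (extMulFst mV fW Lt v β u) (extMulFst mW fV Ltw β v α) (fV w)
        - extMulFst mV fW Lt (fV v) (fW β) (extMulFst mV fW Lt u α w))
      = rho mV fV fW Lt Ltw v α w - rho mV fV fW Lt Ltw u β w := by
  have hcomm := map_transpose_eq_transpose_map hpV hfW hfWinv hdual hLt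
  have hV := hVls u v w
  have hW := transpose_leftSymm hpV hWls hdual hLt α β w
  simp only [extMulFst, rho, map_sub, LinearMap.sub_apply, hfWinv, ← hcomm]
  linear_combination (norm := abel) hV - hW

end ExtendedProduct

theorem extendible_leftSymmetric_iff {V W : Type*} [AddCommGroup V] [Module ℝ V] [AddCommGroup W] [Module ℝ W]
    -- duality pairing between W (= V*) and V
    (p : W →ₗ[ℝ] V →ₗ[ℝ] ℝ)
    (hpV : ∀ v : V, (∀ α : W, p α v = 0) → v = 0)
    (hpW : ∀ α : W, (∀ v : V, p α v = 0) → α = 0)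
    -- involutive hom-left-symmetric algebra (V, ·, φ)
    (mV : V →ₗ[ℝ] V →ₗ[ℝ] V) (fV : V →ₗ[ℝ] V)
    (hfV : ∀ u v : V, fV (mV u v) = mV (fV u) (fV v))
    (hfVinv : ∀ u : V, fV (fV u) = u)
    (hVls : ∀ u v w : V,
      mV (mV u v) (fV w) - mV (fV u) (mV v w) = mV (mV v u) (fV w) - mV (fV v) (mV u w))
    -- involutive hom-left-symmetric algebra (V*, ·, φ*)
    (mW : W →ₗ[ℝ] W →ₗ[ℝ] W) (fW : W →ₗ[ℝ] W)
    (hfW : ∀ α β : W, fW (mW α β) = mW (fW α) (fW β))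
    (hfWinv : ∀ α : W, fW (fW α) = α)
    (hWls : ∀ α β γ : W,
      mW (mW α β) (fW γ) - mW (fW α) (mW β γ) = mW (mW β α) (fW γ) - mW (fW β) (mW α γ))
    -- φ* = φᵗ
    (hdual : ∀ (α : W) (v : V), p (fW α) v = p α (fV v))
    -- transposes of the left multiplications: Lᵗ_α : V → V and Lᵗ_u : W → W
    (Lt : W →ₗ[ℝ] V →ₗ[ℝ] V)
    (hLt : ∀ (α : W) (v : V) (β : W), p β (Lt α v) = p (mW α β) v)
    (Ltw : V →ₗ[ℝ] W →ₗ[ℝ] W)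
    (hLtw : ∀ (u : V) (β : W) (v : V), p (Ltw u β) v = p β (mV u v))
    -- the extended product and morphism on V ⊕ V*
    (M : V × W → V × W → V × W)
    (hM : ∀ x y : V × W,
      M x y = (mV x.1 y.1 - Lt (fW x.2) y.1, mW x.2 y.2 - Ltw (fV x.1) y.2))
    (Φ : V × W → V × W)
    (hΦ : ∀ x : V × W, Φ x = (fV x.1, fW x.2))
    (ρ : V → W → V → V)
    (hρ : ∀ (u : V) (α : W) (v : V),
      ρ u α v = - mV (fV u) (Lt (fW α) v) + Lt α (mV u v)
        - fV (Lt (Ltw (fV u) α) v) - mV (Lt (fW α) u) (fV v))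
    (ρs : W → V → W → W)
    (hρs : ∀ (α : W) (u : V) (β : W),
      ρs α u β = - mW (fW α) (Ltw (fV u) β) + Ltw u (mW α β)
        - fW (Ltw (Lt (fW α) u) β) - mW (Ltw (fV u) α) (fW β)) :
    (∀ x y z : V × W,
      M (M x y) (Φ z) - M (Φ x) (M y z) = M (M y x) (Φ z) - M (Φ y) (M x z)) ↔
    ((∀ (u : V) (α : W) (v : V), ρ u α v = 0) ∧
     (∀ (α : W) (u : V) (β : W), ρs α u β = 0)) := by
  have hM' : ∀ x y, M x y = (extMulFst mV fW Lt x.1 x.2 y.1, extMulFst mW fV Ltw x.2 x.1 y.2) := hM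
  have hρ' : ∀ u α v, ρ u α v = rho mV fV fW Lt Ltw u α v := hρ
  have hρs' : ∀ α u β, ρs α u β = rho mW fW fV Ltw Lt α u β := hρs
  have defect : ∀ x y z : V × W,
      (M (M x y) (Φ z) - M (Φ x) (M y z)) - (M (M y x) (Φ z) - M (Φ y) (M x z))
        = (ρ y.1 x.2 z.1 - ρ x.1 y.2 z.1, ρs y.2 x.1 z.2 - ρs x.2 y.1 z.2) := by
    intro x y z
    simp only [hM', hΦ, hρ', hρs']
    exact Prod.ext (extMulFst_leftSymm_defect hpV hVls hfW hfWinv hWls hdual hLt ..)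
      (extMulFst_leftSymm_defect (p := p.flip) hpW hWls hfV hfVinv hVls
        (fun v α => (hdual α v).symm) hLtw ..)
  simp_rw [← sub_eq_zero (a := M (M _ _) (Φ _) - _), defect, Prod.mk_eq_zero, sub_eq_zero]
  constructor
  · intro H
    refine ⟨fun u α v => ?_, fun α u β => ?_⟩
    · simpa [hρ] using (H (0, α) (u, 0) (v, 0)).1
    · simpa [hρs] using (H (u, 0) (0, α) (0, β)).2
  · rintro ⟨hr, hrs⟩ x y z
    simp only [hr, hrs, and_self]
end

section
/- The extendible hom-algebra (V ⊕ V*, ·, Φ) is hom-Lie-admissible (its commutator satisfies the hom-Jacobi identity) if and only if ρ(u,α)v = ρ(v,α)u for all u,v ∈ V, α ∈ V*, and ρ*(α,u)β = ρ*(β,u)α for all α,β ∈ V*, u ∈ V. -/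
set_option maxHeartbeats 4000000 in
theorem extendible_homLieAdmissible_iff {V W : Type*} [AddCommGroup V] [Module ℝ V] [AddCommGroup W] [Module ℝ W]
    -- duality pairing between W (= V*) and V
    (p : W →ₗ[ℝ] V →ₗ[ℝ] ℝ)
    (hpV : ∀ v : V, (∀ α : W, p α v = 0) → v = 0)
    (hpW : ∀ α : W, (∀ v : V, p α v = 0) → α = 0)
    -- involutive hom-left-symmetric algebra (V, ·, φ)
    (mV : V →ₗ[ℝ] V →ₗ[ℝ] V) (fV : V →ₗ[ℝ] V)
    (hfV : ∀ u v : V, fV (mV u v) = mV (fV u) (fV v))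
    (hfVinv : ∀ u : V, fV (fV u) = u)
    (hVls : ∀ u v w : V,
      mV (mV u v) (fV w) - mV (fV u) (mV v w) = mV (mV v u) (fV w) - mV (fV v) (mV u w))
    -- involutive hom-left-symmetric algebra (V*, ·, φ*)
    (mW : W →ₗ[ℝ] W →ₗ[ℝ] W) (fW : W →ₗ[ℝ] W)
    (hfW : ∀ α β : W, fW (mW α β) = mW (fW α) (fW β))
    (hfWinv : ∀ α : W, fW (fW α) = α)
    (hWls : ∀ α β γ : W,
      mW (mW α β) (fW γ) - mW (fW α) (mW β γ) = mW (mW β α) (fW γ) - mW (fW β) (mW α γ))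
    -- φ* = φᵗ
    (hdual : ∀ (α : W) (v : V), p (fW α) v = p α (fV v))
    -- transposes of the left multiplications: Lᵗ_α : V → V and Lᵗ_u : W → W
    (Lt : W →ₗ[ℝ] V →ₗ[ℝ] V)
    (hLt : ∀ (α : W) (v : V) (β : W), p β (Lt α v) = p (mW α β) v)
    (Ltw : V →ₗ[ℝ] W →ₗ[ℝ] W)
    (hLtw : ∀ (u : V) (β : W) (v : V), p (Ltw u β) v = p β (mV u v))
    -- the extended product and morphism on V ⊕ V*
    (M : V × W → V × W → V × W)
    (hM : ∀ x y : V × W,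
      M x y = (mV x.1 y.1 - Lt (fW x.2) y.1, mW x.2 y.2 - Ltw (fV x.1) y.2))
    (Φ : V × W → V × W)
    (hΦ : ∀ x : V × W, Φ x = (fV x.1, fW x.2))
    (ρ : V → W → V → V)
    (hρ : ∀ (u : V) (α : W) (v : V),
      ρ u α v = - mV (fV u) (Lt (fW α) v) + Lt α (mV u v)
        - fV (Lt (Ltw (fV u) α) v) - mV (Lt (fW α) u) (fV v))
    (ρs : W → V → W → W)
    (hρs : ∀ (α : W) (u : V) (β : W),
      ρs α u β = - mW (fW α) (Ltw (fV u) β) + Ltw u (mW α β)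
        - fW (Ltw (Lt (fW α) u) β) - mW (Ltw (fV u) α) (fW β))
    (Br : V × W → V × W → V × W)
    (hBr : ∀ x y : V × W, Br x y = M x y - M y x) :
    (∀ x y z : V × W,
      Br (Φ x) (Br y z) + Br (Φ y) (Br z x) + Br (Φ z) (Br x y) = 0) ↔
    ((∀ (u v : V) (α : W), ρ u α v = ρ v α u) ∧
     (∀ (α β : W) (u : V), ρs α u β = ρs β u α)) := by
  -- equality tests via the nondegenerate pairing
  have eqV : ∀ x y : V, (∀ α : W, p α x = p α y) → x = y := by
    intro x y h
    exact sub_eq_zero.mp (hpV (x - y) fun α => by rw [map_sub, h α, sub_self])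
  have eqW : ∀ x y : W, (∀ v : V, p x v = p y v) → x = y := by
    intro x y h
    exact sub_eq_zero.mp (hpW (x - y) fun v => by
      rw [map_sub, LinearMap.sub_apply, h v, sub_self])
  -- φ intertwines the transposed multiplications
  have key1 : ∀ (δ : W) (v : V), fV (Lt δ v) = Lt (fW δ) (fV v) := by
    intro δ v
    apply eqV
    intro δ'
    have e1 : p δ' (fV (Lt δ v)) = p (mW δ (fW δ')) v := by
      rw [← hdual, hLt]
    have e2 : p δ' (Lt (fW δ) (fV v)) = p (mW δ (fW δ')) v := by
      rw [hLt]
      have : mW (fW δ) δ' = fW (mW δ (fW δ')) := by rw [hfW, hfWinv]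
      rw [this, hdual, hfVinv]
    rw [e1, e2]
  have key2 : ∀ (d : V) (β : W), fW (Ltw d β) = Ltw (fV d) (fW β) := by
    intro d β
    apply eqW
    intro v
    have e1 : p (fW (Ltw d β)) v = p β (mV d (fV v)) := by
      rw [hdual, hLtw]
    have e2 : p (Ltw (fV d) (fW β)) v = p β (mV d (fV v)) := by
      rw [hLtw, hdual, hfV, hfVinv]
    rw [e1, e2]
  -- the quadratic identity on the W side, acting on V
  have key3 : ∀ (β γ : W) (u : V),
      Lt (fW (mW β γ)) (fV u) - Lt (fW (mW γ β)) (fV u)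
        + Lt β (Lt (fW γ) u) - Lt γ (Lt (fW β) u) = 0 := by
    intro β γ u
    apply hpV
    intro δ
    have e1 : ∀ X : W, p δ (Lt (fW X) (fV u)) = p (mW X (fW δ)) u := by
      intro X
      rw [hLt]
      have : mW (fW X) δ = fW (mW X (fW δ)) := by rw [hfW, hfWinv]
      rw [this, hdual, hfVinv]
    have e3 : p δ (Lt β (Lt (fW γ) u)) = p (mW (fW γ) (mW β δ)) u := by
      rw [hLt, hLt]
    have e4 : p δ (Lt γ (Lt (fW β) u)) = p (mW (fW β) (mW γ δ)) u := by
      rw [hLt, hLt]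
    have h := congrArg (fun ξ : W => p ξ u) (hWls β γ δ)
    simp only [map_sub, map_add, LinearMap.sub_apply, LinearMap.add_apply] at h ⊢
    rw [e1 (mW β γ), e1 (mW γ β), e3, e4]
    linarith
  -- the quadratic identity on the V side, acting on W
  have key4 : ∀ (v w : V) (α : W),
      Ltw (fV (mV v w)) (fW α) - Ltw (fV (mV w v)) (fW α)
        + Ltw v (Ltw (fV w) α) - Ltw w (Ltw (fV v) α) = 0 := by
    intro v w α
    apply hpW
    intro v'
    have e1 : ∀ X : V, p (Ltw (fV X) (fW α)) v' = p α (mV X (fV v')) := by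
      intro X
      rw [hLtw, hdual, hfV, hfVinv]
    have e3 : p (Ltw v (Ltw (fV w) α)) v' = p α (mV (fV w) (mV v v')) := by
      rw [hLtw, hLtw]
    have e4 : p (Ltw w (Ltw (fV v) α)) v' = p α (mV (fV v) (mV w v')) := by
      rw [hLtw, hLtw]
    have h := congrArg (fun ξ : V => p α ξ) (hVls v w v')
    simp only [map_sub, map_add, LinearMap.sub_apply, LinearMap.add_apply] at h ⊢
    rw [e1 (mV v w), e1 (mV w v), e3, e4]
    linarith
  -- master formula for the hom-Jacobiator
  have master : ∀ x y z : V × W,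
      Br (Φ x) (Br y z) + Br (Φ y) (Br z x) + Br (Φ z) (Br x y) =
      (ρ y.1 z.2 x.1 - ρ x.1 z.2 y.1 + ρ z.1 x.2 y.1 - ρ y.1 x.2 z.1
          + ρ x.1 y.2 z.1 - ρ z.1 y.2 x.1,
       ρs y.2 z.1 x.2 - ρs x.2 z.1 y.2 + ρs z.2 x.1 y.2 - ρs y.2 x.1 z.2
          + ρs x.2 y.1 z.2 - ρs z.2 y.1 x.2) := by
    rintro ⟨u, α⟩ ⟨v, β⟩ ⟨w, γ⟩
    simp only [hBr, hM, hΦ, hρ, hρs]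
    simp only [Prod.mk_sub_mk, Prod.mk_add_mk, Prod.mk.injEq]
    constructor
    · simp only [map_sub, map_add, map_neg, LinearMap.sub_apply, LinearMap.add_apply,
        LinearMap.neg_apply, hfVinv, hfWinv]
      linear_combination (norm := module)
        - hVls v w u - hVls w u v - hVls u v w
        + key3 β γ u + key3 γ α v + key3 α β w
        + key1 (Ltw (fV v) γ) u - key1 (Ltw (fV u) γ) v
        + key1 (Ltw (fV w) α) v - key1 (Ltw (fV v) α) w
        + key1 (Ltw (fV u) β) w - key1 (Ltw (fV w) β) u
    · simp only [map_sub, map_add, map_neg, LinearMap.sub_apply, LinearMap.add_apply,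
        LinearMap.neg_apply, hfVinv, hfWinv]
      linear_combination (norm := module)
        - hWls β γ α - hWls γ α β - hWls α β γ
        + key4 v w α + key4 w u β + key4 u v γ
        + key2 (Lt (fW β) w) α - key2 (Lt (fW α) w) β
        + key2 (Lt (fW γ) u) β - key2 (Lt (fW β) u) γ
        + key2 (Lt (fW α) v) γ - key2 (Lt (fW γ) v) α
  -- vanishing of ρ and ρs when an argument is zero
  have hρz1 : ∀ (α : W) (v : V), ρ 0 α v = 0 := by intro α v; rw [hρ]; simp
  have hρz2 : ∀ (u v : V), ρ u 0 v = 0 := by intro u v; rw [hρ]; simp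
  have hρz3 : ∀ (u : V) (α : W), ρ u α 0 = 0 := by intro u α; rw [hρ]; simp
  have hρsz1 : ∀ (u : V) (β : W), ρs 0 u β = 0 := by intro u β; rw [hρs]; simp
  have hρsz2 : ∀ (α β : W), ρs α 0 β = 0 := by intro α β; rw [hρs]; simp
  have hρsz3 : ∀ (α : W) (u : V), ρs α u 0 = 0 := by intro α u; rw [hρs]; simp
  constructor
  · intro h
    constructor
    · intro u v α
      have H := (master (u, 0) (v, 0) (0, α)).symm.trans (h (u, 0) (v, 0) (0, α))
      have H1 := congrArg Prod.fst H
      simp only [hρz1, hρz2, hρz3, Prod.fst, add_zero, sub_zero, zero_sub, zero_add,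
        neg_zero] at H1
      have := sub_eq_zero.mp (by
        have : ρ v α u - ρ u α v = 0 := H1
        exact this)
      exact this.symm
    · intro α β u
      have H := (master (0, α) (0, β) (u, 0)).symm.trans (h (0, α) (0, β) (u, 0))
      have H1 := congrArg Prod.snd H
      simp only [hρsz1, hρsz2, hρsz3, Prod.snd, add_zero, sub_zero, zero_sub, zero_add,
        neg_zero] at H1
      have := sub_eq_zero.mp (by
        have : ρs β u α - ρs α u β = 0 := H1
        exact this)
      exact this.symm
  · rintro ⟨h1, h2⟩ x y z
    rw [master, h1 y.1 x.1 z.2, h1 z.1 y.1 x.2, h1 x.1 z.1 y.2,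
      h2 y.2 x.2 z.1, h2 z.2 y.2 x.1, h2 x.2 z.2 y.1]
    refine Prod.ext ?_ ?_ <;> simp only [Prod.fst, Prod.snd, Prod.fst_zero, Prod.snd_zero] <;> abel
end
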